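/- arXiv:1402.1464 — 2 statements merged into one kernel-verified Lean document; each statement's English description precedes it below -/
import Mathlib

section
/- Let α = (α₁, …, α_r) be a composition with 1 ≤ α_p < n for all p, and let ∅ = λ⁽⁰⁾ ⊆ λ⁽¹⁾ ⊆ ⋯ ⊆ λ⁽ʳ⁾ be n-cores such that (λ⁽ᵖ⁻¹⁾, λ⁽ᵖ⁾) is a horizontal strong (n−1−α_p)-strip for each 1 ≤ p ≤ r. Define μ⁽⁰⁾ = λ⁽ʳ⁾ and, for 1 ≤ p ≤ r, let μ⁽ᵖ⁾ be the sequence whose first p − 1 parts are λ⁽ʳ⁻ʲ⁾₁ + n − 1 for j = 1, …, p − 1 (in this order), followed by the parts of R(n−1, λ⁽ʳ⁻ᵖ⁾). Then each μ⁽ᵖ⁾ is a partition, μ⁽ᵖ⁻¹⁾ ⊆ μ⁽ᵖ⁾, and the skew shape μ⁽ᵖ⁾/μ⁽ᵖ⁻¹⁾ is a horizontal strip, for every 1 ≤ p ≤ r. -/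
open scoped Classical

/-- A partition: an antitone, eventually-zero sequence of row lengths.
Row `0` is the bottom row; `part i` is the length of row `i`. -/
structure YPartition where
  part : ℕ → ℕ
  antitone' : ∀ ⦃i j : ℕ⦄, i ≤ j → part j ≤ part i
  eventually_zero : ∃ N, ∀ i, N ≤ i → part i = 0

def emptyPartition : YPartition :=
  ⟨fun _ => 0, fun _ _ _ => le_rfl, ⟨0, fun _ _ => rfl⟩⟩

/-- Cells of a partition, 0-indexed: `(i, j)` is in row `i` (from the bottom), column `j`. -/
def cells (p : YPartition) : Set (ℕ × ℕ) := {c | c.2 < p.part c.1}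

/-- Containment of partitions. -/
def Included (p q : YPartition) : Prop := ∀ i, p.part i ≤ q.part i

/-- The skew shape `q/p`. -/
def skewCells (q p : YPartition) : Set (ℕ × ℕ) := cells q \ cells p

/-- The content of a cell. -/
def content (c : ℕ × ℕ) : ℤ := (c.2 : ℤ) - (c.1 : ℤ)

/-- The number of cells of `p` above `(i,j)` in column `j`. -/
noncomputable def legLen (p : YPartition) (i j : ℕ) : ℕ :=
  Nat.card {i' : ℕ // i < i' ∧ j < p.part i'}

/-- The hook length of the cell `(i,j)` of `p`. -/
noncomputable def hookLen (p : YPartition) (i j : ℕ) : ℕ :=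
  (p.part i - j) + legLen p i j

/-- An `n`-core: no cell has hook length `n`. -/
def IsCore (n : ℕ) (p : YPartition) : Prop :=
  ∀ i j : ℕ, j < p.part i → hookLen p i j ≠ n

/-- The degree of an `n`-core: the number of cells with hook length `< n`. -/
noncomputable def degCore (n : ℕ) (p : YPartition) : ℕ :=
  Nat.card {c : ℕ × ℕ // c ∈ cells p ∧ hookLen p c.1 c.2 < n}

/-- The covering relation of the strong (Bruhat) order on `n`-cores. -/
def StrongCover (n : ℕ) (p q : YPartition) : Prop :=
  IsCore n p ∧ IsCore n q ∧ Included p q ∧ degCore n q = degCore n p + 1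

/-- `q/p` is a horizontal strip: at most one cell in each column. -/
def IsHorizontalStrip (p q : YPartition) : Prop :=
  Included p q ∧ ∀ i, q.part (i + 1) ≤ p.part i

/-- The number of cells of a partition. -/
noncomputable def psize (p : YPartition) : ℕ := Nat.card {c : ℕ × ℕ // c ∈ cells p}

/-- The number of cells of the skew shape `q/p`. -/
noncomputable def skewSize (q p : YPartition) : ℕ := Nat.card {c : ℕ × ℕ // c ∈ skewCells q p}

/-- Edgewise adjacency of cells. -/
def AdjCells (c d : ℕ × ℕ) : Prop :=
  (c.1 = d.1 ∧ (c.2 + 1 = d.2 ∨ d.2 + 1 = c.2)) ∨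
  (c.2 = d.2 ∧ (c.1 + 1 = d.1 ∨ d.1 + 1 = c.1))

/-- A ribbon: a nonempty edgewise-connected set of cells with no 2×2 block. -/
def IsRibbon (S : Set (ℕ × ℕ)) : Prop :=
  S.Nonempty ∧
  (∀ c ∈ S, ∀ d ∈ S, Relation.ReflTransGen (fun x y => y ∈ S ∧ AdjCells x y) c d) ∧
  ∀ i j : ℕ, ¬ ((i, j) ∈ S ∧ (i + 1, j) ∈ S ∧ (i, j + 1) ∈ S ∧ (i + 1, j + 1) ∈ S)

/-- `c` is the head (southeasternmost cell) of `S`. -/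
def IsHead (S : Set (ℕ × ℕ)) (c : ℕ × ℕ) : Prop :=
  c ∈ S ∧ ∀ d ∈ S, c.1 ≤ d.1 ∧ d.2 ≤ c.2

/-- `c` is the tail (northwesternmost cell) of `S`. -/
def IsTail (S : Set (ℕ × ℕ)) (c : ℕ × ℕ) : Prop :=
  c ∈ S ∧ ∀ d ∈ S, d.1 ≤ c.1 ∧ c.2 ≤ d.2

/-- `S` is a connected component of `T` which is a ribbon (one of the ribbons of `T`). -/
def IsRibbonComponent (T S : Set (ℕ × ℕ)) : Prop :=
  S ⊆ T ∧ IsRibbon S ∧ ∀ c ∈ S, ∀ d ∈ T, AdjCells c d → d ∈ S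

/-- `R(n-1, p) = (p₁ + n - 1, p₁, p₂, …)`. -/
def Rtop (n : ℕ) (p : YPartition) : YPartition where
  part i := if i = 0 then p.part 0 + (n - 1) else p.part (i - 1)
  antitone' := by
    intro i j hij
    try dsimp only
    by_cases hj : j = 0
    · have hi : i = 0 := by omega
      simp [hi, hj]
    · by_cases hi : i = 0
      · simp only [hi, if_pos rfl, if_neg hj]
        exact le_trans (p.antitone' (Nat.zero_le _)) (Nat.le_add_right _ _)
      · simp only [if_neg hi, if_neg hj]
        exact p.antitone' (by omega)
  eventually_zero := by
    obtain ⟨N, hN⟩ := p.eventually_zero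
    refine ⟨N + 1, fun i hi => ?_⟩
    have hi0 : i ≠ 0 := by omega
    simp only [if_neg hi0]
    exact hN _ (by omega)

/-- `(λ, ν)` is a horizontal strong `m`-strip. -/
def IsHorizontalStrongStrip (n : ℕ) (lam nu : YPartition) (m : ℕ) : Prop :=
  Included lam nu ∧ m + degCore n nu = (n - 1) + degCore n lam ∧
  ∃ γ : ℕ → YPartition, γ 0 = nu ∧ γ m = Rtop n lam ∧
    ∀ i < m, StrongCover n (γ i) (γ (i + 1)) ∧ (γ i).part 0 < (γ (i + 1)).part 0

/-- A strong `m`-strip from `nu` to `gam` with chain `γ` and content vector `c 1, …, c m`. -/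
def IsStrongStrip (n m : ℕ) (nu gam : YPartition) (γ : ℕ → YPartition) (c : ℕ → ℤ) : Prop :=
  γ 0 = nu ∧ γ m = gam ∧
  (∀ i < m, StrongCover n (γ i) (γ (i + 1)) ∧
    ∃ S, IsRibbonComponent (skewCells (γ (i + 1)) (γ i)) S ∧
      ∃ h, IsHead S h ∧ content h = c (i + 1)) ∧
  ∀ i, 1 ≤ i → i < m → c i < c (i + 1)

/-- Ribbon strong strips (with prescribed target core `Rc` and prescribed column set). -/
def IsRibbonStrongStrip (n : ℕ) (nu Rc : YPartition) (cols : Set ℕ) (m : ℕ) : Prop :=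
  ∃ γ : ℕ → YPartition, γ 0 = nu ∧ γ m = Rc ∧
    ∀ i < m, StrongCover n (γ i) (γ (i + 1)) ∧
      ∃ S, IsRibbonComponent (skewCells (γ (i + 1)) (γ i)) S ∧
        ∃ t, IsTail S t ∧ t.2 ∈ cols

/- ### The affine symmetric group -/

/-- The underlying function of the simple reflection `s_i` of the affine symmetric group. -/
def sFun (n : ℕ) (i k : ℤ) : ℤ :=
  if (k - i) % n = 0 then k + 1 else if (k - i) % n = 1 then k - 1 else k

lemma one_emod_eq (n : ℕ) (hn : 2 ≤ n) : (1 : ℤ) % n = 1 :=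
  Int.emod_eq_of_lt (by norm_num) (by exact_mod_cast hn)

lemma sFun_involutive (n : ℕ) (hn : 2 ≤ n) (i : ℤ) : Function.Involutive (sFun n i) := by
  have h1n := one_emod_eq n hn
  intro k
  by_cases h0 : (k - i) % n = 0
  · have e1 : (k + 1 - i) % n = 1 := by
      have e : k + 1 - i = (k - i) + 1 := by ring
      rw [e, Int.add_emod, h0, h1n]
      simpa using h1n
    have hk : sFun n i k = k + 1 := by simp [sFun, h0]
    rw [hk]
    simp [sFun, e1]
  · by_cases h1 : (k - i) % n = 1
    · have e0 : (k - 1 - i) % n = 0 := by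
        have e : k - 1 - i = (k - i) - 1 := by ring
        rw [e, Int.sub_emod, h1, h1n]
        simp
      have hk : sFun n i k = k - 1 := by simp [sFun, h0, h1]
      rw [hk]
      simp [sFun, e0]
    · have hk : sFun n i k = k := by simp [sFun, h0, h1]
      rw [hk]
      simp [sFun, h0, h1]

/-- The simple reflection `s_i` (depending only on `i mod n`). -/
noncomputable def sRefl (n : ℕ) (hn : 2 ≤ n) (i : ℤ) : Equiv.Perm ℤ :=
  Function.Involutive.toPerm (sFun n i) (sFun_involutive n hn i)

/-- The product `s_{i₁} ⋯ s_{i_ℓ}` of the word `l = [i₁, …, i_ℓ]`. -/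
noncomputable def wordProd (n : ℕ) (hn : 2 ≤ n) (l : List ℤ) : Equiv.Perm ℤ :=
  (l.map (sRefl n hn)).prod

/-- The Coxeter length: minimal length of a word in the simple reflections. -/
noncomputable def alen (n : ℕ) (hn : 2 ≤ n) (w : Equiv.Perm ℤ) : ℕ :=
  sInf {m : ℕ | ∃ l : List ℤ, l.length = m ∧ w = wordProd n hn l}

def IsReducedWord (n : ℕ) (hn : 2 ≤ n) (w : Equiv.Perm ℤ) (l : List ℤ) : Prop :=
  w = wordProd n hn l ∧ l.length = alen n hn w

/-- Membership in the affine symmetric group. -/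
def IsAffinePerm (n : ℕ) (w : Equiv.Perm ℤ) : Prop :=
  (∀ k : ℤ, w (k + n) = w k + n) ∧
  (∑ i ∈ Finset.range n, w ((i : ℤ) + 1)) = ((n : ℤ) * (n + 1)) / 2

/-- Affine Grassmannian elements: minimal-length coset representatives of S̃ₙ/Sₙ. -/
def IsAffGrassmannian (n : ℕ) (hn : 2 ≤ n) (w : Equiv.Perm ℤ) : Prop :=
  IsAffinePerm n w ∧
  ∀ v ∈ Subgroup.closure {g : Equiv.Perm ℤ | ∃ i : ℤ, ¬ ((i : ℤ) % n = 0) ∧ g = sRefl n hn i},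
    alen n hn w ≤ alen n hn (w * v)

/-- An addable corner of `p` in row `r` (the cell `(r, p.part r)`). -/
def AddableCorner (p : YPartition) (r : ℕ) : Prop :=
  r = 0 ∨ p.part r < p.part (r - 1)

/-- The content of the addable corner of `p` in row `r`. -/
def cornerContent (p : YPartition) (r : ℕ) : ℤ := (p.part r : ℤ) - (r : ℤ)

/-- `q = s_i · p` : `q` is obtained from `p` by adding all addable corners of residue `i`. -/
def ActStep (n : ℕ) (i : ℤ) (p q : YPartition) : Prop :=
  (∃ r, AddableCorner p r ∧ (cornerContent p r - i) % n = 0) ∧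
  ∀ r, q.part r =
    if AddableCorner p r ∧ (cornerContent p r - i) % n = 0 then p.part r + 1 else p.part r

/-- `ActList n l p q` : `q = s_{i₁} · (s_{i₂} · ⋯ (s_{i_ℓ} · p))` for `l = [i₁, …, i_ℓ]`. -/
def ActList (n : ℕ) : List ℤ → YPartition → YPartition → Prop
  | [], p, q => q = p
  | i :: l, p, q => ∃ p', ActList n l p p' ∧ ActStep n i p' q

/-- `p = 𝔞(w)`: `p` is obtained by acting on the empty partition by a reduced word of `w`. -/
def ACoreOf (n : ℕ) (hn : 2 ≤ n) (w : Equiv.Perm ℤ) (p : YPartition) : Prop :=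
  ∃ l : List ℤ, IsReducedWord n hn w l ∧ ActList n l emptyPartition p

/-- `w_λ`: the affine Grassmannian element corresponding to the `n`-core `p`. -/
noncomputable def wOf (n : ℕ) (hn : 2 ≤ n) (p : YPartition) : Equiv.Perm ℤ :=
  if h : ∃ w : Equiv.Perm ℤ, IsAffGrassmannian n hn w ∧ ACoreOf n hn w p then h.choose else 1

/-- A cyclically decreasing word: pairwise distinct residues, and `i+1` precedes `i`. -/
def IsCDWord (n : ℕ) (l : List ℤ) : Prop :=
  l.Pairwise (fun a b : ℤ => ¬ ((a - b) % (n : ℤ) = 0) ∧ ¬ ((b - (a + 1)) % (n : ℤ) = 0))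

/-- A cyclically decreasing element of the affine symmetric group. -/
def IsCyclicallyDecreasing (n : ℕ) (hn : 2 ≤ n) (w : Equiv.Perm ℤ) : Prop :=
  ∃ l : List ℤ, IsReducedWord n hn w l ∧ IsCDWord n l

/-- The underlying function of the transposition `τ_{a,b}`. -/
def tauFun (n : ℕ) (a b k : ℤ) : ℤ :=
  if (k - a) % n = 0 then k + (b - a) else if (k - b) % n = 0 then k - (b - a) else k

lemma tauFun_involutive (n : ℕ) (a b : ℤ) (h : ¬ ((b - a) % n = 0)) :
    Function.Involutive (tauFun n a b) := by
  intro k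
  by_cases h0 : (k - a) % n = 0
  · have e1 : (k + (b - a) - a) % n = (b - a) % n := by
      have e : k + (b - a) - a = (k - a) + (b - a) := by ring
      rw [e, Int.add_emod, h0]
      simp [Int.emod_emod_of_dvd]
    have e2 : (k + (b - a) - b) % n = 0 := by
      have e : k + (b - a) - b = k - a := by ring
      rw [e]; exact h0
    have hk : tauFun n a b k = k + (b - a) := by simp [tauFun, h0]
    rw [hk]
    simp [tauFun, e1, e2, h]
  · by_cases h1 : (k - b) % n = 0
    · have e0 : (k - (b - a) - a) % n = 0 := by
        have e : k - (b - a) - a = k - b := by ring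
        rw [e]; exact h1
      have hk : tauFun n a b k = k - (b - a) := by simp [tauFun, h0, h1]
      rw [hk]
      simp [tauFun, e0]
    · have hk : tauFun n a b k = k := by simp [tauFun, h0, h1]
      rw [hk]
      simp [tauFun, h0, h1]

/-- The transposition `τ_{a,b}` of the affine symmetric group (`a ≢ b (mod n)`). -/
noncomputable def tauRefl (n : ℕ) (a b : ℤ) (h : ¬ ((b - a) % n = 0)) : Equiv.Perm ℤ :=
  Function.Involutive.toPerm (tauFun n a b) (tauFun_involutive n a b h)

/- ### The maps p and 𝔠, rectangles -/

/-- `pMap n γ i`: the number of cells in row `i` of `γ` with hook length `< n`. -/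
noncomputable def pMap (n : ℕ) (γ : YPartition) (i : ℕ) : ℕ :=
  Nat.card {j : ℕ // j < γ.part i ∧ hookLen γ i j < n}

/-- The number of parts of `f` that are `≥ t`. -/
noncomputable def numPartsGe (f : ℕ → ℕ) (t : ℕ) : ℕ := Nat.card {i : ℕ // t ≤ f i}

/-- The rectangle `R_r = (r^(n-r))`. -/
def rectPartition (n r : ℕ) : YPartition where
  part i := if i < n - r then r else 0
  antitone' := by
    intro i j hij
    try dsimp only
    by_cases hj : j < n - r
    · simp [hj, show i < n - r by omega]
    · simp [hj]
  eventually_zero := ⟨n - r, fun i hi => by simp [Nat.not_lt.mpr hi]⟩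

/-- The product `v r * v (r-1) * ⋯ * v 1`. -/
noncomputable def revProd (v : ℕ → Equiv.Perm ℤ) : ℕ → Equiv.Perm ℤ
  | 0 => 1
  | j + 1 => v (j + 1) * revProd v j

/-- The sequence `μ⁽ᵖ⁾`: first `p - 1` parts `λ⁽ʳ⁻ʲ⁾₁ + n - 1` (`j = 1, …, p-1`), followed by
the parts of `R(n-1, λ⁽ʳ⁻ᵖ⁾)`; and `μ⁽⁰⁾ = λ⁽ʳ⁾`. -/
noncomputable def muSeq (n r : ℕ) (lam : ℕ → YPartition) (p : ℕ) : ℕ → ℕ :=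
  if p = 0 then (lam r).part
  else fun i => if i + 1 < p then (lam (r - (i + 1))).part 0 + (n - 1)
                else (Rtop n (lam (r - p))).part (i - (p - 1))

/-! Each strip `(λ⁽ᵖ⁻¹⁾, λ⁽ᵖ⁾)` gives `λ⁽ᵖ⁻¹⁾ ⊆ λ⁽ᵖ⁾ ⊆ R(n−1, λ⁽ᵖ⁻¹⁾)`: the first inclusion is part of
the definition, the second holds because every strong cover is an inclusion of shapes. The first
`p − 1` parts of `μ⁽ᵖ⁾` and `μ⁽ᵖ⁻¹⁾` agree, and from part `p` on they are `R(n−1, λ⁽ʳ⁻ᵖ⁾)` and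
`λ⁽ʳ⁻ᵖ⁺¹⁾`. So `μ⁽ᵖ⁻¹⁾ ⊆ μ⁽ᵖ⁾` is the second inclusion, while the horizontal-strip condition and
the monotonicity of the parts of `μ⁽ᵖ⁾` come from the first. -/

theorem Included.trans {p q s : YPartition} (hpq : Included p q) (hqs : Included q s) :
    Included p s :=
  fun i => (hpq i).trans (hqs i)

theorem included_of_chain {γ : ℕ → YPartition} {m : ℕ}
    (h : ∀ i < m, Included (γ i) (γ (i + 1))) : Included (γ 0) (γ m) := by
  induction m with
  | zero => exact fun _ => le_rfl
  | succ m ih => exact (ih fun i hi => h i (by omega)).trans (h m (by omega))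

@[simp]
theorem Rtop_part_zero (n : ℕ) (p : YPartition) : (Rtop n p).part 0 = p.part 0 + (n - 1) := rfl

@[simp]
theorem Rtop_part_succ (n : ℕ) (p : YPartition) (i : ℕ) : (Rtop n p).part (i + 1) = p.part i :=
  rfl

theorem IsHorizontalStrongStrip.included_rtop {n m : ℕ} {lam nu : YPartition}
    (h : IsHorizontalStrongStrip n lam nu m) : Included nu (Rtop n lam) := by
  obtain ⟨-, -, γ, rfl, hγm, hcov⟩ := h
  exact hγm ▸ included_of_chain fun i hi => (hcov i hi).1.2.2.1

section muSeq

variable {n r : ℕ} {lam : ℕ → YPartition}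

theorem muSeq_of_lt {p i : ℕ} (hi : i < p) :
    muSeq n r lam p i = (lam (r - (i + 1))).part 0 + (n - 1) := by
  rcases Nat.lt_or_ge (i + 1) p with hlt | hge
  · simp [muSeq, hlt, show p ≠ 0 by omega]
  · obtain rfl : p = i + 1 := by omega
    simp [muSeq]

theorem muSeq_of_le {p i : ℕ} (hi : p ≤ i) : muSeq n r lam p i = (lam (r - p)).part (i - p) := by
  rcases Nat.eq_zero_or_pos p with rfl | hp
  · simp [muSeq]
  · simp only [muSeq, show ¬ i + 1 < p by omega, show p ≠ 0 by omega, if_false]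
    rw [show i - (p - 1) = i - p + 1 by omega, Rtop_part_succ]

theorem muSeq_succ_of_le {q i : ℕ} (hi : q ≤ i) :
    muSeq n r lam (q + 1) i = (Rtop n (lam (r - (q + 1)))).part (i - q) := by
  simp [muSeq, show ¬ i + 1 < q + 1 by omega]

theorem muSeq_eventually_zero (p : ℕ) : ∃ N, ∀ i, N ≤ i → muSeq n r lam p i = 0 := by
  obtain ⟨N, hN⟩ := (lam (r - p)).eventually_zero
  exact ⟨N + p, fun i hi => by rw [muSeq_of_le (by omega)]; exact hN _ (by omega)⟩

theorem muSeq_antitone (hinc : ∀ j < r, Included (lam (r - (j + 1))) (lam (r - j)))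
    {q : ℕ} (hq : q < r) : Antitone (muSeq n r lam (q + 1)) := by
  refine antitone_nat_of_succ_le fun i => ?_
  rcases Nat.lt_or_ge i q with hi | hi
  · rw [muSeq_of_lt (by omega), muSeq_of_lt (by omega)]
    exact Nat.add_le_add_right (hinc (i + 1) (by omega) 0) _
  · rw [muSeq_succ_of_le hi, muSeq_succ_of_le (by omega)]
    exact (Rtop n _).antitone' (by omega)

theorem muSeq_le_muSeq_succ (hR : ∀ j < r, Included (lam (r - j)) (Rtop n (lam (r - (j + 1)))))
    {q : ℕ} (hq : q < r) (i : ℕ) : muSeq n r lam q i ≤ muSeq n r lam (q + 1) i := by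
  rcases Nat.lt_or_ge i q with hi | hi
  · rw [muSeq_of_lt hi, muSeq_of_lt (by omega)]
  · rw [muSeq_of_le hi, muSeq_succ_of_le hi]
    exact hR q hq _

theorem muSeq_succ_succ_le (hinc : ∀ j < r, Included (lam (r - (j + 1))) (lam (r - j)))
    {q : ℕ} (hq : q < r) (i : ℕ) : muSeq n r lam (q + 1) (i + 1) ≤ muSeq n r lam q i := by
  rcases Nat.lt_or_ge i q with hi | hi
  · rw [muSeq_of_lt (by omega), muSeq_of_lt hi]
    exact Nat.add_le_add_right (hinc (i + 1) (by omega) 0) _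
  · rw [muSeq_succ_of_le (by omega), muSeq_of_le hi, show i + 1 - q = i - q + 1 by omega,
      Rtop_part_succ]
    exact hinc q hq _

end muSeq

theorem abc_rows_are_horizontal_strips_general
    (n : ℕ) (r : ℕ) (α : ℕ → ℕ)
    (lam : ℕ → YPartition)
    (hstrip : ∀ p, 1 ≤ p → p ≤ r →
      IsHorizontalStrongStrip n (lam (p - 1)) (lam p) (n - 1 - α p)) :
    ∀ p, 1 ≤ p → p ≤ r →
      (∀ i j, i ≤ j → muSeq n r lam p j ≤ muSeq n r lam p i) ∧
      (∃ N, ∀ i, N ≤ i → muSeq n r lam p i = 0) ∧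
      (∀ i, muSeq n r lam (p - 1) i ≤ muSeq n r lam p i) ∧
      (∀ i, muSeq n r lam p (i + 1) ≤ muSeq n r lam (p - 1) i) := by
  have hstrip' : ∀ j < r,
      IsHorizontalStrongStrip n (lam (r - (j + 1))) (lam (r - j)) (n - 1 - α (r - j)) :=
    fun j hj => by simpa [Nat.sub_sub] using hstrip (r - j) (by omega) (Nat.sub_le r j)
  have hinc := fun j hj => (hstrip' j hj).1
  have hR := fun j hj => (hstrip' j hj).included_rtop
  intro p hp hpr
  obtain ⟨q, rfl⟩ : ∃ q, p = q + 1 := ⟨p - 1, by omega⟩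
  rw [Nat.add_sub_cancel]
  exact ⟨fun _ _ hij => muSeq_antitone hinc (by omega) hij, muSeq_eventually_zero _,
    muSeq_le_muSeq_succ hR (by omega), muSeq_succ_succ_le hinc (by omega)⟩

/-- Each `μ⁽ᵖ⁾` is a partition, `μ⁽ᵖ⁻¹⁾ ⊆ μ⁽ᵖ⁾`, and `μ⁽ᵖ⁾/μ⁽ᵖ⁻¹⁾` is a
horizontal strip, for every `1 ≤ p ≤ r`. -/
theorem abc_rows_are_horizontal_strips
    (n : ℕ) (hn : 2 ≤ n) (r : ℕ) (α : ℕ → ℕ)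
    (hα : ∀ p, 1 ≤ p → p ≤ r → 1 ≤ α p ∧ α p < n)
    (lam : ℕ → YPartition) (h0 : lam 0 = emptyPartition)
    (hcore : ∀ p, p ≤ r → IsCore n (lam p))
    (hstrip : ∀ p, 1 ≤ p → p ≤ r →
      IsHorizontalStrongStrip n (lam (p - 1)) (lam p) (n - 1 - α p)) :
    ∀ p, 1 ≤ p → p ≤ r →
      (∀ i j, i ≤ j → muSeq n r lam p j ≤ muSeq n r lam p i) ∧
      (∃ N, ∀ i, N ≤ i → muSeq n r lam p i = 0) ∧
      (∀ i, muSeq n r lam (p - 1) i ≤ muSeq n r lam p i) ∧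
      (∀ i, muSeq n r lam p (i + 1) ≤ muSeq n r lam (p - 1) i) :=
  abc_rows_are_horizontal_strips_general n r α lam hstrip
end

section
/- Let λ, μ ∈ P^n be partitions of the same size, with μ = (μ₁ ≥ ⋯ ≥ μ_r > 0). If there exists a sequence of n-cores ∅ = λ⁽⁰⁾ ⊆ λ⁽¹⁾ ⊆ ⋯ ⊆ λ⁽ʳ⁾ = 𝔠(λ) such that (λ⁽ⁱ⁻¹⁾, λ⁽ⁱ⁾) is a horizontal strong (n−1−μ_i)-strip for every 1 ≤ i ≤ r, then μ is dominated by λ, i.e., μ₁ + ⋯ + μ_s ≤ λ₁ + ⋯ + λ_s for all s ≥ 1. -/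
open scoped Classical

/-!
A horizontal strong strip `(λ⁽ⁱ⁻¹⁾, λ⁽ⁱ⁾)` of weight `n - 1 - μᵢ` raises the degree by `μᵢ`, and
`λ⁽ⁱ⁾ ⊆ R(n-1, λ⁽ⁱ⁻¹⁾)` makes it interlace: `λ⁽ⁱ⁾_{j+1} ≤ λ⁽ⁱ⁻¹⁾_j`. Hence `λ⁽ˢ⁾` has at most
`s` rows and `μ₁ + ⋯ + μₛ = deg λ⁽ˢ⁾ = p(λ⁽ˢ⁾)₁ + ⋯ + p(λ⁽ˢ⁾)ₛ`.

In row `i` of an `n`-core `γ` there is an `m` with `γ_{i+m} + n = γ_i + m`, and then the cells of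
row `i` with hook length `< n` are exactly those in the columns `≥ γ_{i+m}`, so `p(γ)_i = n - m`.
Interlacing forces this `m` to weakly decrease along the sequence, so
`p(λ⁽ˢ⁾)_j ≤ p(λ⁽ʳ⁾)_j = λ_j`.
-/

open Finset

lemma monotoneOn_Iic_of_le_succ {α : Type*} [Preorder α] {f : ℕ → α} {m : ℕ}
    (hf : ∀ i < m, f i ≤ f (i + 1)) : MonotoneOn f (Set.Iic m) :=
  monotoneOn_of_le_succ Set.ordConnected_Iic fun i _ _ hi =>
    hf i (Order.succ_le_iff.mp hi)

lemma natCard_subtype_eq_card_filter {α : Type*} (s : Finset α) (P : α → Prop)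
    (hP : ∀ x, P x → x ∈ s) : Nat.card {x // P x} = #(s.filter P) := by
  rw [← Nat.card_eq_finsetCard]
  exact Nat.card_congr (Equiv.subtypeEquivRight fun x => by simpa using fun h => hP x h)

section Hooks

variable {p : YPartition} {i j t : ℕ}

lemma legLen_le_of_part_le (h : p.part (i + t + 1) ≤ j) : legLen p i j ≤ t := by
  have hsub : {i' | i < i' ∧ j < p.part i'} ⊆ Set.Ioc i (i + t) := fun x ⟨hix, hjx⟩ =>
    ⟨hix, not_lt.mp fun hx => (p.antitone' (show i + t + 1 ≤ x by omega)).not_gt (by omega)⟩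
  calc legLen p i j = {i' | i < i' ∧ j < p.part i'}.ncard := Nat.card_coe_set_eq _
    _ ≤ (Set.Ioc i (i + t)).ncard := Set.ncard_le_ncard hsub (Set.finite_Ioc _ _)
    _ = t := by simp

lemma le_legLen_of_lt_part (h : j < p.part (i + t)) : t ≤ legLen p i j := by
  have hsub : Set.Ioc i (i + t) ⊆ {i' | i < i' ∧ j < p.part i'} := fun x ⟨hix, hxt⟩ =>
    ⟨hix, h.trans_le (p.antitone' hxt)⟩
  obtain ⟨N, hN⟩ := p.eventually_zero
  have hfin : {i' | i < i' ∧ j < p.part i'}.Finite :=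
    (Set.finite_Iio N).subset fun x ⟨_, hjx⟩ =>
      Set.mem_Iio.mpr (not_le.mp fun hx => by simp [hN x hx] at hjx)
  calc t = (Set.Ioc i (i + t)).ncard := by simp
    _ ≤ {i' | i < i' ∧ j < p.part i'}.ncard := Set.ncard_le_ncard hsub hfin
    _ = legLen p i j := (Nat.card_coe_set_eq _).symm

lemma le_legLen_iff (hj : j < p.part i) : t ≤ legLen p i j ↔ j < p.part (i + t) := by
  refine ⟨fun ht => not_le.mp fun hpt => ?_, le_legLen_of_lt_part⟩
  rcases t with _ | t
  · rw [Nat.add_zero] at hpt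
    omega
  · exact absurd (legLen_le_of_part_le hpt) (by omega)

lemma pMap_add_eq_of_part_add_eq {n m : ℕ} (h : p.part (i + m) + n = p.part i + m) :
    pMap n p i + m = n := by
  have hle : p.part (i + m) ≤ p.part i := p.antitone' (Nat.le_add_right i m)
  have hrow : ∀ j, j < p.part i ∧ hookLen p i j < n ↔ j ∈ Ico (p.part (i + m)) (p.part i) := by
    intro j
    rw [mem_Ico, hookLen]
    refine ⟨fun ⟨hj, hhook⟩ => ⟨not_lt.mp fun hjm => ?_, hj⟩, fun ⟨hjm, hj⟩ => ⟨hj, ?_⟩⟩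
    · have := (le_legLen_iff hj).mpr hjm
      omega
    · have := mt (le_legLen_iff (t := m) hj).mp (not_lt.mpr hjm)
      omega
  have hcard : pMap n p i = p.part i - p.part (i + m) := by
    rw [pMap, ← Nat.card_Ico, ← Nat.card_eq_finsetCard]
    exact Nat.card_congr (Equiv.subtypeEquivRight hrow)
  omega

/-- Take the least `m` with `p.part (i + m) + n ≤ p.part i + m`; were the inequality strict, the
cell of row `i` in column `p.part i + m - 1 - n` would have hook length `n`. -/
lemma IsCore.exists_part_add_eq {n : ℕ} (hp : IsCore n p) (i : ℕ) :
    ∃ m, p.part (i + m) + n = p.part i + m := by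
  have hex : ∃ k, p.part (i + k) + n ≤ p.part i + k :=
    ⟨n, by have := p.antitone' (Nat.le_add_right i n); omega⟩
  refine ⟨Nat.find hex, (Nat.find_spec hex).antisymm (not_lt.mp fun hlt => ?_)⟩
  obtain ⟨m, hm⟩ : ∃ m, Nat.find hex = m + 1 :=
    Nat.exists_eq_succ_of_ne_zero fun h0 => by rw [h0, Nat.add_zero] at hlt; omega
  have hmin : p.part i + m < p.part (i + m) + n := not_le.mp (Nat.find_min hex (by omega))
  rw [hm, ← add_assoc] at hlt
  set j := p.part i + m - n
  have hj : j < p.part i := by have := p.antitone' (Nat.le_add_right i m); omega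
  have hleg : legLen p i j = m :=
    (legLen_le_of_part_le (by omega)).antisymm ((le_legLen_iff hj).mpr (by omega))
  exact hp i j hj (by rw [hookLen, hleg]; omega)

lemma pMap_le_pMap_of_interlace {n : ℕ} {q : YPartition} (hp : IsCore n p) (hq : IsCore n q)
    (hpq : Included p q) (hqp : ∀ k, q.part (k + 1) ≤ p.part k) (i : ℕ) :
    pMap n p i ≤ pMap n q i := by
  obtain ⟨a, ha⟩ := hp.exists_part_add_eq i
  obtain ⟨b, hb⟩ := hq.exists_part_add_eq i
  have hba : b ≤ a := not_lt.mp fun hab => by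
    have := q.antitone' (show i + a + 1 ≤ i + b by omega)
    have := hqp (i + a)
    have := hpq i
    omega
  have := pMap_add_eq_of_part_add_eq ha
  have := pMap_add_eq_of_part_add_eq hb
  omega

end Hooks

lemma degCore_eq_sum_pMap (n : ℕ) {p : YPartition} {N : ℕ} (hN : ∀ i, N ≤ i → p.part i = 0) :
    degCore n p = ∑ i ∈ range N, pMap n p i := by
  have hbound : ∀ c : ℕ × ℕ, c.2 < p.part c.1 → c.1 < N ∧ c.2 < p.part 0 := fun c hc =>
    ⟨not_le.mp fun h => by simp [hN _ h] at hc, hc.trans_le (p.antitone' (Nat.zero_le _))⟩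
  rw [degCore, natCard_subtype_eq_card_filter (range N ×ˢ range (p.part 0)) _
      fun c hc => by simpa using hbound c hc.1,
    card_filter, sum_product]
  refine sum_congr rfl fun i _ => ?_
  rw [pMap, natCard_subtype_eq_card_filter (range (p.part 0)) _
      fun j hj => by simpa using (hbound (i, j) hj.1).2,
    card_filter]
  rfl

lemma part_eq_zero_of_interlace {f : ℕ → YPartition} (hf0 : f 0 = emptyPartition) {s : ℕ}
    (hf : ∀ i < s, ∀ k, (f (i + 1)).part (k + 1) ≤ (f i).part k) :
    ∀ k, s ≤ k → (f s).part k = 0 := by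
  induction s with
  | zero => intro k _; rw [hf0]; rfl
  | succ s ih =>
    rintro (_ | k) hk
    · omega
    · have := ih (fun i hi => hf i (by omega)) k (by omega)
      have := hf s (by omega) k
      omega

namespace IsHorizontalStrongStrip

variable {n m : ℕ} {a b : YPartition}

lemma part_succ_le (h : IsHorizontalStrongStrip n a b m) (k : ℕ) : b.part (k + 1) ≤ a.part k := by
  obtain ⟨_, _, g, hg0, hgm, hcov⟩ := h
  have hmono : MonotoneOn (fun t => (g t).part (k + 1)) (Set.Iic m) :=
    monotoneOn_Iic_of_le_succ fun t ht => (hcov t ht).1.2.2.1 (k + 1)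
  simpa [hg0, hgm, Rtop] using hmono (Set.mem_Iic.mpr (Nat.zero_le m)) Set.self_mem_Iic
    (Nat.zero_le m)

lemma degCore_eq {k : ℕ} (h : IsHorizontalStrongStrip n a b (n - 1 - k)) (hk : k < n) :
    degCore n b = degCore n a + k := by
  have := h.2.1
  omega

end IsHorizontalStrongStrip

theorem strip_sequence_implies_dominance_general
    (n : ℕ) (lam mu : YPartition)
    (hmuPn : ∀ i, mu.part i < n)
    (r : ℕ)
    (hzero : ∀ i, r ≤ i → mu.part i = 0)
    (γ : YPartition) (hγ : ∀ i, pMap n γ i = lam.part i)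
    (f : ℕ → YPartition) (hf0 : f 0 = emptyPartition) (hfr : f r = γ)
    (hfcore : ∀ i, i ≤ r → IsCore n (f i))
    (hstrip : ∀ i < r, IsHorizontalStrongStrip n (f i) (f (i + 1)) (n - 1 - mu.part i)) :
    ∀ s : ℕ, ∑ i ∈ Finset.range s, mu.part i ≤ ∑ i ∈ Finset.range s, lam.part i := by
  have hinter := fun i (hi : i < r) => (hstrip i hi).part_succ_le
  have hdeg : ∀ s ≤ r, degCore n (f s) = ∑ i ∈ range s, mu.part i := by
    intro s hs
    induction s with
    | zero =>
      rw [hf0, degCore_eq_sum_pMap n (N := 0) fun _ _ => rfl, sum_range_zero, sum_range_zero]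
    | succ s ih =>
      rw [sum_range_succ, ← ih (by omega), (hstrip s hs).degCore_eq (hmuPn s)]
  have hpMap : ∀ s ≤ r, ∀ j, pMap n (f s) j ≤ lam.part j := fun s hs j => by
    have hmono : MonotoneOn (fun t => pMap n (f t) j) (Set.Iic r) :=
      monotoneOn_Iic_of_le_succ fun t ht => pMap_le_pMap_of_interlace (hfcore t ht.le)
        (hfcore (t + 1) ht) (hstrip t ht).1 (hinter t ht) j
    simpa [hfr, hγ] using hmono hs Set.self_mem_Iic hs
  have hdom : ∀ s ≤ r, ∑ i ∈ range s, mu.part i ≤ ∑ i ∈ range s, lam.part i := fun s hs =>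
    calc ∑ i ∈ range s, mu.part i = ∑ j ∈ range s, pMap n (f s) j := by
          rw [← hdeg s hs, degCore_eq_sum_pMap n
            (part_eq_zero_of_interlace hf0 fun i hi => hinter i (by omega))]
      _ ≤ ∑ j ∈ range s, lam.part j := sum_le_sum fun j _ => hpMap s hs j
  intro s
  rcases le_total s r with hsr | hrs
  · exact hdom s hsr
  · obtain ⟨k, rfl⟩ := Nat.exists_eq_add_of_le hrs
    have htail : ∑ i ∈ range k, mu.part (r + i) = 0 := sum_eq_zero fun i _ => hzero _ (by omega)
    rw [sum_range_add, sum_range_add, htail, add_zero]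
    exact le_add_right (hdom r le_rfl)

/-- If an `ABC`-type sequence of horizontal strong strips of weight `μ` and
shape `𝔠(λ)` exists, then `μ` is dominated by `λ`. -/
theorem strip_sequence_implies_dominance
    (n : ℕ) (hn : 2 ≤ n) (lam mu : YPartition)
    (hlamPn : ∀ i, lam.part i < n) (hmuPn : ∀ i, mu.part i < n)
    (hsize : psize lam = psize mu) (r : ℕ)
    (hpos : ∀ i < r, 0 < mu.part i) (hzero : ∀ i, r ≤ i → mu.part i = 0)
    (γ : YPartition) (hγcore : IsCore n γ) (hγ : ∀ i, pMap n γ i = lam.part i)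
    (f : ℕ → YPartition) (hf0 : f 0 = emptyPartition) (hfr : f r = γ)
    (hfcore : ∀ i, i ≤ r → IsCore n (f i))
    (hstrip : ∀ i < r, IsHorizontalStrongStrip n (f i) (f (i + 1)) (n - 1 - mu.part i)) :
    ∀ s : ℕ, ∑ i ∈ Finset.range s, mu.part i ≤ ∑ i ∈ Finset.range s, lam.part i :=
  strip_sequence_implies_dominance_general n lam mu hmuPn r hzero γ hγ f hf0 hfr hfcore hstrip
end
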